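/- In a sparse graph G, every edge is contained in a unique maximal rigid block (rigid component), and any two distinct rigid components of G intersect in at most one vertex. -/

import Mathlib

open SimpleGraph

variable {V : Type*}

/-- Number of type-1 vertices in a vertex set. -/
noncomputable def n1 (t1 : V → Prop) (S : Set V) : ℕ := {v ∈ S | t1 v}.ncard

/-- Number of type-2 vertices in a vertex set. -/
noncomputable def n2 (t1 : V → Prop) (S : Set V) : ℕ := {v ∈ S | ¬ t1 v}.ncard

/-- Number of edges of `G` with both endpoints in `S`. -/
noncomputable def edgesIn (G : SimpleGraph V) (S : Set V) : ℕ :=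
  {e ∈ G.edgeSet | ∀ v ∈ e, v ∈ S}.ncard

/-- Sparsity: every subgraph on `n' ≥ 2` vertices has at most
`n₁' + 2 n₂' + min 0 (n₁' - 3)` edges. -/
def Sparse (G : SimpleGraph V) (t1 : V → Prop) : Prop :=
  ∀ S : Set V, 2 ≤ S.ncard →
    (edgesIn G S : ℤ) ≤ (n1 t1 S : ℤ) + 2 * n2 t1 S + min 0 ((n1 t1 S : ℤ) - 3)

/-- Minimal rigidity: either one vertex, or sparse with exactly
`n₁ + 2 n₂ + min 0 (n₁ - 3)` edges. -/
def MinRigid (G : SimpleGraph V) (t1 : V → Prop) : Prop :=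
  Nat.card V = 1 ∨
    (Sparse G t1 ∧
      (G.edgeSet.ncard : ℤ) = (n1 t1 Set.univ : ℤ) + 2 * n2 t1 Set.univ +
        min 0 ((n1 t1 Set.univ : ℤ) - 3))

/-- Rigidity: contains a spanning minimally rigid subgraph. -/
def Rigid (G : SimpleGraph V) (t1 : V → Prop) : Prop :=
  ∃ H : SimpleGraph V, H ≤ G ∧ MinRigid H t1

/-- A rigid block: a vertex-induced rigid subgraph, identified with its vertex set. -/
def RigidBlock (G : SimpleGraph V) (t1 : V → Prop) (S : Set V) : Prop :=
  Rigid (G.induce S) (fun v => t1 ↑v)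

/-- A rigid component: an inclusion-wise maximal rigid block. -/
def RigidComponent (G : SimpleGraph V) (t1 : V → Prop) (S : Set V) : Prop :=
  RigidBlock G t1 S ∧ ∀ T : Set V, RigidBlock G t1 T → S ⊆ T → S = T


/-!
Write `f S = n₁ + 2 n₂ + min 0 (n₁ - 3)` and `i S` for the number of edges spanned by `S`.
In a sparse graph a set with at least two vertices is a rigid block exactly when it is tight,
`i S = f S`, because the induced subgraph on a tight set is itself minimally rigid. The bound `f`
is submodular and `i` is supermodular, so for tight `S`, `T` with `|S ∩ T| ≥ 2`
`i (S ∪ T) ≥ i S + i T - i (S ∩ T) ≥ f S + f T - f (S ∩ T) ≥ f (S ∪ T)`,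
and `S ∪ T` is tight. An edge spans a tight pair, hence lies in a maximal rigid block, and two
maximal blocks sharing two vertices both equal their union.
-/

noncomputable def sparsityBound (t1 : V → Prop) (S : Set V) : ℤ :=
  (n1 t1 S : ℤ) + 2 * n2 t1 S + min 0 ((n1 t1 S : ℤ) - 3)

section Counting

variable {W : Type*}

theorem ncard_sep_image {f : W → V} (hf : f.Injective) (p : V → Prop) (S : Set W) :
    {v ∈ f '' S | p v}.ncard = {w ∈ S | p (f w)}.ncard := by
  rw [← Set.ncard_image_of_injective _ hf]
  exact congrArg Set.ncard (Set.image_inter_preimage f S {v | p v}).symm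

theorem sparsityBound_image {f : W → V} (hf : f.Injective) (t1 : V → Prop) (S : Set W) :
    sparsityBound (fun w => t1 (f w)) S = sparsityBound t1 (f '' S) := by
  simp only [sparsityBound, n1, n2, ncard_sep_image hf]

theorem edgesIn_comap (G : SimpleGraph V) (f : W ↪ V) (S : Set W) :
    edgesIn (G.comap f) S = edgesIn G (f '' S) := by
  rw [edgesIn, edgesIn, ← Set.ncard_image_of_injective _ (Sym2.map.injective f.injective)]
  congr 1
  ext e
  constructor
  · rintro ⟨e, ⟨he, heS⟩, rfl⟩
    induction e using Sym2.ind with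
    | _ a b =>
      rw [Sym2.forall_mem_pair] at heS
      exact ⟨he, Sym2.forall_mem_pair.mpr ⟨⟨a, heS.1, rfl⟩, ⟨b, heS.2, rfl⟩⟩⟩
  · induction e using Sym2.ind with
    | _ x y =>
      rintro ⟨hxy, hxyS⟩
      obtain ⟨⟨a, ha, rfl⟩, ⟨b, hb, rfl⟩⟩ := Sym2.forall_mem_pair.mp hxyS
      exact ⟨s(a, b), ⟨hxy, Sym2.forall_mem_pair.mpr ⟨ha, hb⟩⟩, rfl⟩

theorem Sparse.comap {G : SimpleGraph V} {t1 : V → Prop} (hG : Sparse G t1) (f : W ↪ V) :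
    Sparse (G.comap f) (fun w => t1 (f w)) := by
  intro S hS
  have hS' : 2 ≤ (f '' S).ncard := by rwa [Set.ncard_image_of_injective _ f.injective]
  rw [edgesIn_comap]
  exact (hG _ hS').trans_eq (sparsityBound_image f.injective t1 S).symm

theorem edgesIn_univ (G : SimpleGraph V) : edgesIn G Set.univ = G.edgeSet.ncard := by
  simp [edgesIn]

theorem ncard_edgeSet_induce (G : SimpleGraph V) (S : Set V) :
    (G.induce S).edgeSet.ncard = edgesIn G S := by
  rw [← edgesIn_univ, edgesIn_comap]
  simp

theorem sparsityBound_induce_univ (t1 : V → Prop) (S : Set V) :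
    sparsityBound (fun v : S => t1 v) Set.univ = sparsityBound t1 S := by
  rw [sparsityBound_image Subtype.val_injective]
  simp

theorem n1_add_n2 (t1 : V → Prop) {S : Set V} (hS : S.Finite) :
    n1 t1 S + n2 t1 S = S.ncard :=
  Set.ncard_inter_add_ncard_sdiff_eq_ncard S {v | t1 v} hS

theorem sparsityBound_of_ncard_eq_two (t1 : V → Prop) {S : Set V} (hS : S.ncard = 2) :
    sparsityBound t1 S = 1 := by
  have hsum := n1_add_n2 t1 (Set.finite_of_ncard_pos (by omega : 0 < S.ncard))
  unfold sparsityBound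
  omega

end Counting

section Submodularity

variable [Finite V]

theorem ncard_sep_union_add_ncard_sep_inter (p : V → Prop) (S T : Set V) :
    {v ∈ S ∪ T | p v}.ncard + {v ∈ S ∩ T | p v}.ncard =
      {v ∈ S | p v}.ncard + {v ∈ T | p v}.ncard := by
  convert Set.ncard_union_add_ncard_inter {v ∈ S | p v} {v ∈ T | p v} using 3 <;> ext <;> simp

/-- The correction term `min 0 (n₁ - 3)` is concave in `n₁`, which makes the bound submodular. -/
theorem sparsityBound_union_add_inter_le (t1 : V → Prop) (S T : Set V) :
    sparsityBound t1 (S ∪ T) + sparsityBound t1 (S ∩ T) ≤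
      sparsityBound t1 S + sparsityBound t1 T := by
  have h1 := ncard_sep_union_add_ncard_sep_inter t1 S T
  have h2 := ncard_sep_union_add_ncard_sep_inter (fun v => ¬ t1 v) S T
  have hS : n1 t1 (S ∩ T) ≤ n1 t1 S :=
    Set.ncard_le_ncard fun _ hv => ⟨Set.inter_subset_left hv.1, hv.2⟩
  have hT : n1 t1 (S ∩ T) ≤ n1 t1 T :=
    Set.ncard_le_ncard fun _ hv => ⟨Set.inter_subset_right hv.1, hv.2⟩
  simp only [sparsityBound, n1, n2] at *
  omega

theorem edgesIn_add_edgesIn_le (G : SimpleGraph V) (S T : Set V) :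
    edgesIn G S + edgesIn G T ≤ edgesIn G (S ∪ T) + edgesIn G (S ∩ T) := by
  unfold edgesIn
  rw [← Set.ncard_union_add_ncard_inter]
  exact add_le_add
    (Set.ncard_le_ncard fun e he => he.elim (fun hS => ⟨hS.1, fun v hv => .inl (hS.2 v hv)⟩)
      fun hT => ⟨hT.1, fun v hv => .inr (hT.2 v hv)⟩)
    (Set.ncard_le_ncard fun _ ⟨hS, hT⟩ => ⟨hS.1, fun v hv => ⟨hS.2 v hv, hT.2 v hv⟩⟩)

end Submodularity

section RigidBlocks

variable [Finite V] {G : SimpleGraph V} {t1 : V → Prop} {S T : Set V}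

theorem rigidBlock_iff_sparsityBound_le (hG : Sparse G t1) (hS : 2 ≤ S.ncard) :
    RigidBlock G t1 S ↔ sparsityBound t1 S ≤ edgesIn G S := by
  constructor
  · rintro ⟨H, hHG, hH | ⟨-, hcount⟩⟩
    · rw [Nat.card_coe_set_eq] at hH
      omega
    · change (H.edgeSet.ncard : ℤ) = sparsityBound _ Set.univ at hcount
      rw [sparsityBound_induce_univ] at hcount
      rw [← hcount, ← ncard_edgeSet_induce]
      exact_mod_cast Set.ncard_le_ncard (edgeSet_mono hHG)
  · intro h
    refine ⟨G.induce S, le_rfl, Or.inr ⟨hG.comap _, ?_⟩⟩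
    change ((G.induce S).edgeSet.ncard : ℤ) = sparsityBound (fun v : S => t1 v) Set.univ
    rw [ncard_edgeSet_induce, sparsityBound_induce_univ]
    exact le_antisymm (hG S hS) h

theorem RigidBlock.union (hG : Sparse G t1) (hS : RigidBlock G t1 S) (hT : RigidBlock G t1 T)
    (hST : 2 ≤ (S ∩ T).ncard) : RigidBlock G t1 (S ∪ T) := by
  have hS2 : 2 ≤ S.ncard := hST.trans (Set.ncard_le_ncard Set.inter_subset_left)
  have hT2 : 2 ≤ T.ncard := hST.trans (Set.ncard_le_ncard Set.inter_subset_right)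
  have hU2 : 2 ≤ (S ∪ T).ncard := hS2.trans (Set.ncard_le_ncard Set.subset_union_left)
  rw [rigidBlock_iff_sparsityBound_le hG hS2] at hS
  rw [rigidBlock_iff_sparsityBound_le hG hT2] at hT
  rw [rigidBlock_iff_sparsityBound_le hG hU2]
  have hInter : (edgesIn G (S ∩ T) : ℤ) ≤ sparsityBound t1 (S ∩ T) := hG _ hST
  have hBound := sparsityBound_union_add_inter_le t1 S T
  have hEdges : (edgesIn G S + edgesIn G T : ℤ) ≤ edgesIn G (S ∪ T) + edgesIn G (S ∩ T) := by
    exact_mod_cast edgesIn_add_edgesIn_le G S T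
  linarith

theorem rigidBlock_pair (hG : Sparse G t1) {u v : V} (huv : G.Adj u v) :
    RigidBlock G t1 {u, v} := by
  have hcard : ({u, v} : Set V).ncard = 2 := Set.ncard_pair huv.ne
  rw [rigidBlock_iff_sparsityBound_le hG hcard.ge, sparsityBound_of_ncard_eq_two t1 hcard]
  have huvIn : s(u, v) ∈ {e ∈ G.edgeSet | ∀ w ∈ e, w ∈ ({u, v} : Set V)} :=
    ⟨huv, Sym2.forall_mem_pair.mpr ⟨Or.inl rfl, Or.inr rfl⟩⟩
  have hpos : 0 < edgesIn G {u, v} := (Set.ncard_pos (Set.toFinite _)).mpr ⟨_, huvIn⟩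
  exact_mod_cast hpos

theorem RigidComponent.eq_of_two_le_ncard_inter (hG : Sparse G t1) (hS : RigidComponent G t1 S)
    (hT : RigidComponent G t1 T) (hST : 2 ≤ (S ∩ T).ncard) : S = T :=
  (hS.2 _ (hS.1.union hG hT.1 hST) Set.subset_union_left).trans
    (hT.2 _ (hS.1.union hG hT.1 hST) Set.subset_union_right).symm

theorem RigidBlock.exists_rigidComponent_superset (hS : RigidBlock G t1 S) :
    ∃ T, RigidComponent G t1 T ∧ S ⊆ T := by
  obtain ⟨T, hST, hT, hmax⟩ := Finite.exists_le_maximal hS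
  exact ⟨T, ⟨hT, fun U hU hTU => le_antisymm hTU (hmax hU hTU)⟩, hST⟩

end RigidBlocks

/-- In a sparse graph, every edge is contained in a unique rigid component, and
any two distinct rigid components intersect in at most one vertex. -/
theorem stmt10 {V : Type*} [Fintype V] (G : SimpleGraph V) (t1 : V → Prop)
    (hG : Sparse G t1) :
    (∀ e ∈ G.edgeSet, ∃! S : Set V,
      RigidComponent G t1 S ∧ ∀ v ∈ e, v ∈ S) ∧
    (∀ S T : Set V, RigidComponent G t1 S → RigidComponent G t1 T → S ≠ T →
      (S ∩ T).ncard ≤ 1) := by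
  refine ⟨fun e he => ?_, fun S T hS hT hST => ?_⟩
  · induction e using Sym2.ind with
    | _ u v =>
      simp only [Sym2.forall_mem_pair, ← Set.pair_subset_iff]
      obtain ⟨S, hS, huvS⟩ := (rigidBlock_pair hG he).exists_rigidComponent_superset
      have two_le_inter {T : Set V} (huvT : {u, v} ⊆ T) : 2 ≤ (T ∩ S).ncard :=
        (Set.ncard_pair he.ne).ge.trans (Set.ncard_le_ncard (Set.subset_inter huvT huvS))
      exact ⟨S, ⟨hS, huvS⟩, fun T ⟨hT, huvT⟩ =>
        hT.eq_of_two_le_ncard_inter hG hS (two_le_inter huvT)⟩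
  · by_contra! h
    exact hST (hS.eq_of_two_le_ncard_inter hG hT h)
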